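/- In the equational theory CP extended with the axiom T ◁ x ▷ T = T, the equation x ◁ y ▷ x = x is derivable for all x, y. -/

import Mathlib

inductive CE (A : Type) : Type
  | tt : CE A
  | ff : CE A
  | atom : A → CE A
  | cond : CE A → CE A → CE A → CE A

inductive Deriv {A : Type} (Ax : CE A → CE A → Prop) : CE A → CE A → Prop
  | ax {t t'} : Ax t t' → Deriv Ax t t'
  | refl (t) : Deriv Ax t t
  | symm {t t'} : Deriv Ax t t' → Deriv Ax t' t
  | trans {t t' t''} : Deriv Ax t t' → Deriv Ax t' t'' → Deriv Ax t t''
  | congr {x x' y y' z z'} : Deriv Ax x x' → Deriv Ax y y' → Deriv Ax z z' →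
      Deriv Ax (.cond x y z) (.cond x' y' z')
  | cp1 (x y) : Deriv Ax (.cond x .tt y) x
  | cp2 (x y) : Deriv Ax (.cond x .ff y) y
  | cp3 (x) : Deriv Ax (.cond .tt x .ff) x
  | cp4 (x y z u v) : Deriv Ax (.cond x (.cond y z u) v) (.cond (.cond x y v) z (.cond x u v))

/-- Derivability from the CP axioms alone (no extra axioms). -/
def CP {A : Type} : CE A → CE A → Prop := Deriv (fun _ _ => False)

/-- The extra axiom scheme T ◁ x ▷ T = T. -/
def AxOh {A : Type} : CE A → CE A → Prop :=
  fun s t => ∃ x : CE A, s = .cond .tt x .tt ∧ t = .tt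

/-! By CP1 both copies of `x` equal `x ◁ T ▷ x`, so CP4 folds `x ◁ y ▷ x` into `x ◁ (T ◁ y ▷ T) ▷ x`;
the extra axiom collapses the middle term to `T`, and CP1 finishes. -/

namespace Deriv

variable {A : Type} {Ax : CE A → CE A → Prop}

instance : Trans (Deriv Ax) (Deriv Ax) (Deriv Ax) := ⟨Deriv.trans⟩

theorem cond_self_cond_tt_tt (x y : CE A) :
    Deriv Ax (.cond x (.cond .tt y .tt) x) (.cond x y x) :=
  (cp4 x .tt y .tt x).trans (congr (cp1 x x) (refl y) (cp1 x x))

end Deriv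

theorem cond_self_derivable (A : Type) (x y : CE A) :
    Deriv AxOh (.cond x y x) x :=
  calc Deriv AxOh (.cond x y x) (.cond x (.cond .tt y .tt) x) :=
        (Deriv.cond_self_cond_tt_tt x y).symm
    Deriv AxOh _ (.cond x .tt x) := Deriv.congr (.refl x) (.ax ⟨y, rfl, rfl⟩) (.refl x)
    Deriv AxOh _ x := Deriv.cp1 x x
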